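/- Let H be a finitely generated abelian group and let s = μ(H) be its minimal number of generators. If ω₁, …, ω_k is a tuple of elements of H that generates H, then there is a finite sequence of elementary transformations carrying (ω₁, …, ω_k) to a tuple (γ₁, …, γ_k) such that γ₁, …, γ_s generate H (hence form a minimal system of generators) and γ_{s+1} = ⋯ = γ_k = 0. -/

import Mathlib

/-- An elementary transformation of a tuple `(ω₁, …, ω_k)` of elements of an
abelian group `H`:
(i) replace `ω_i` by `ω_i + ω_j` or `ω_i - ω_j` for some `j ≠ i`;
(ii) replace `ω_i` by `-ω_i`;
(iii) permute the entries. -/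
inductive ElemTrans {H : Type*} [AddCommGroup H] {k : ℕ} :
    (Fin k → H) → (Fin k → H) → Prop
  | add (ω : Fin k → H) (i j : Fin k) (hij : i ≠ j) :
      ElemTrans ω (Function.update ω i (ω i + ω j))
  | sub (ω : Fin k → H) (i j : Fin k) (hij : i ≠ j) :
      ElemTrans ω (Function.update ω i (ω i - ω j))
  | neg (ω : Fin k → H) (i : Fin k) :
      ElemTrans ω (Function.update ω i (-ω i))
  | perm (ω : Fin k → H) (σ : Equiv.Perm (Fin k)) :
      ElemTrans ω (ω ∘ σ)

/-- The minimal number of generators `μ(H)` of an abelian group `H`: the least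
`n` such that some `n`-tuple of elements generates `H`. -/
noncomputable def minNumGen (H : Type*) [AddCommGroup H] : ℕ :=
  sInf {n : ℕ | ∃ ω : Fin n → H, AddSubgroup.closure (Set.range ω) = ⊤}

section Main
set_option linter.unusedSectionVars false
set_option linter.unusedVariables false

variable {H : Type*} [AddCommGroup H]

private lemma mem_cl {k : ℕ} (f : Fin k → H) (l : Fin k) :
    f l ∈ AddSubgroup.closure (Set.range f) :=
  AddSubgroup.subset_closure ⟨l, rfl⟩

private lemma elemTrans_closure {k : ℕ} {ω γ : Fin k → H} (h : ElemTrans ω γ) :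
    AddSubgroup.closure (Set.range γ) = AddSubgroup.closure (Set.range ω) := by
  cases h with
  | add i j hij =>
      set γ := Function.update ω i (ω i + ω j) with hγ
      apply le_antisymm <;> refine AddSubgroup.closure_le _ |>.2 ?_ <;> rintro x ⟨l, rfl⟩
      · rcases eq_or_ne l i with rfl | hl
        · have : γ l = ω l + ω j := by rw [hγ, Function.update_self]
          rw [this]; exact add_mem (mem_cl ω l) (mem_cl ω j)
        · have : γ l = ω l := by rw [hγ, Function.update_of_ne hl]
          rw [this]; exact mem_cl ω l
      · rcases eq_or_ne l i with rfl | hl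
        · have : ω l = γ l - γ j := by
            rw [hγ, Function.update_self, Function.update_of_ne (Ne.symm hij)]; abel
          rw [this]; exact sub_mem (mem_cl γ l) (mem_cl γ j)
        · have : ω l = γ l := by rw [hγ, Function.update_of_ne hl]
          rw [this]; exact mem_cl γ l
  | sub i j hij =>
      set γ := Function.update ω i (ω i - ω j) with hγ
      apply le_antisymm <;> refine AddSubgroup.closure_le _ |>.2 ?_ <;> rintro x ⟨l, rfl⟩
      · rcases eq_or_ne l i with rfl | hl
        · have : γ l = ω l - ω j := by rw [hγ, Function.update_self]
          rw [this]; exact sub_mem (mem_cl ω l) (mem_cl ω j)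
        · have : γ l = ω l := by rw [hγ, Function.update_of_ne hl]
          rw [this]; exact mem_cl ω l
      · rcases eq_or_ne l i with rfl | hl
        · have : ω l = γ l + γ j := by
            rw [hγ, Function.update_self, Function.update_of_ne (Ne.symm hij)]; abel
          rw [this]; exact add_mem (mem_cl γ l) (mem_cl γ j)
        · have : ω l = γ l := by rw [hγ, Function.update_of_ne hl]
          rw [this]; exact mem_cl γ l
  | neg i =>
      set γ := Function.update ω i (-ω i) with hγ
      apply le_antisymm <;> refine AddSubgroup.closure_le _ |>.2 ?_ <;> rintro x ⟨l, rfl⟩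
      · rcases eq_or_ne l i with rfl | hl
        · have : γ l = -ω l := by rw [hγ, Function.update_self]
          rw [this]; exact neg_mem (mem_cl ω l)
        · have : γ l = ω l := by rw [hγ, Function.update_of_ne hl]
          rw [this]; exact mem_cl ω l
      · rcases eq_or_ne l i with rfl | hl
        · have : ω l = -γ l := by rw [hγ, Function.update_self]; abel
          rw [this]; exact neg_mem (mem_cl γ l)
        · have : ω l = γ l := by rw [hγ, Function.update_of_ne hl]
          rw [this]; exact mem_cl γ l
  | perm σ =>
      rw [Set.range_comp, Equiv.range_eq_univ, Set.image_univ]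

private lemma reflTrans_closure {k : ℕ} {ω γ : Fin k → H}
    (h : Relation.ReflTransGen ElemTrans ω γ) :
    AddSubgroup.closure (Set.range γ) = AddSubgroup.closure (Set.range ω) := by
  induction h with
  | refl => rfl
  | tail _ hstep ih => rw [elemTrans_closure hstep, ih]

private lemma peel2 {k : ℕ} {M : Type*} [AddCommMonoid M] {i j : Fin k} (hij : i ≠ j)
    (f : Fin k → M) :
    ∑ l, f l = f i + f j + ∑ l ∈ (Finset.univ.erase i).erase j, f l := by
  rw [← Finset.add_sum_erase _ f (Finset.mem_univ i),
    ← Finset.add_sum_erase _ f (Finset.mem_erase.2 ⟨hij.symm, Finset.mem_univ j⟩), add_assoc]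

private lemma peel1 {k : ℕ} {M : Type*} [AddCommMonoid M] (i : Fin k) (f : Fin k → M) :
    ∑ l, f l = f i + ∑ l ∈ Finset.univ.erase i, f l :=
  (Finset.add_sum_erase _ f (Finset.mem_univ i)).symm

private lemma euclid_step {k : ℕ} (ω : Fin k → H) (v c : Fin k → ℤ) {i j : Fin k} (hij : i ≠ j)
    (hvi : v i ≠ 0) (hvj : v j ≠ 0) (habs : (v j).natAbs ≤ (v i).natAbs)
    (hc : ∑ l, c l * v l = 1) :
    ∃ (v' c' : Fin k → ℤ) (γ : Fin k → H),
      ElemTrans ω γ ∧ (∑ l, v' l • γ l = ∑ l, v l • ω l) ∧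
      (∑ l, c' l * v' l = 1) ∧ (∑ l, (v' l).natAbs < ∑ l, (v l).natAbs) := by
  have hc' : c i * v i + c j * v j + ∑ l ∈ (Finset.univ.erase i).erase j, c l * v l = 1 := by
    rw [← peel2 hij (fun l => c l * v l)]; exact hc
  by_cases hsgn : 0 < v i ↔ 0 < v j
  · refine ⟨Function.update v i (v i - v j), Function.update c j (c j + c i),
      Function.update ω j (ω j + ω i), ElemTrans.add ω j i hij.symm, ?_, ?_, ?_⟩
    · rw [peel2 hij, peel2 hij (fun l => v l • ω l)]
      have hrest : ∑ l ∈ (Finset.univ.erase i).erase j,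
          Function.update v i (v i - v j) l • Function.update ω j (ω j + ω i) l
          = ∑ l ∈ (Finset.univ.erase i).erase j, v l • ω l := by
        refine Finset.sum_congr rfl fun l hl => ?_
        have hlj := (Finset.mem_erase.1 hl).1
        have hli := (Finset.mem_erase.1 (Finset.mem_erase.1 hl).2).1
        rw [Function.update_of_ne hli, Function.update_of_ne hlj]
      rw [hrest]
      simp only [Function.update_self, Function.update_of_ne hij, Function.update_of_ne hij.symm]
      rw [sub_smul, smul_add]; abel
    · rw [peel2 hij (fun l => Function.update c j (c j + c i) l * Function.update v i (v i - v j) l)]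
      have hrest : ∑ l ∈ (Finset.univ.erase i).erase j,
          Function.update c j (c j + c i) l * Function.update v i (v i - v j) l
          = ∑ l ∈ (Finset.univ.erase i).erase j, c l * v l := by
        refine Finset.sum_congr rfl fun l hl => ?_
        have hlj := (Finset.mem_erase.1 hl).1
        have hli := (Finset.mem_erase.1 (Finset.mem_erase.1 hl).2).1
        rw [Function.update_of_ne hli, Function.update_of_ne hlj]
      rw [hrest]
      simp only [Function.update_self, Function.update_of_ne hij, Function.update_of_ne hij.symm]
      linear_combination hc'
    · rw [peel1 i (fun l => (Function.update v i (v i - v j) l).natAbs),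
        peel1 i (fun l => (v l).natAbs)]
      have hrest : ∑ l ∈ Finset.univ.erase i, (Function.update v i (v i - v j) l).natAbs
          = ∑ l ∈ Finset.univ.erase i, (v l).natAbs := by
        refine Finset.sum_congr rfl fun l hl => ?_
        rw [Function.update_of_ne (Finset.mem_erase.1 hl).1]
      rw [hrest, Function.update_self]
      have : (v i - v j).natAbs < (v i).natAbs := by omega
      omega
  · refine ⟨Function.update v i (v i + v j), Function.update c j (c j - c i),
      Function.update ω j (ω j - ω i), ElemTrans.sub ω j i hij.symm, ?_, ?_, ?_⟩
    · rw [peel2 hij, peel2 hij (fun l => v l • ω l)]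
      have hrest : ∑ l ∈ (Finset.univ.erase i).erase j,
          Function.update v i (v i + v j) l • Function.update ω j (ω j - ω i) l
          = ∑ l ∈ (Finset.univ.erase i).erase j, v l • ω l := by
        refine Finset.sum_congr rfl fun l hl => ?_
        have hlj := (Finset.mem_erase.1 hl).1
        have hli := (Finset.mem_erase.1 (Finset.mem_erase.1 hl).2).1
        rw [Function.update_of_ne hli, Function.update_of_ne hlj]
      rw [hrest]
      simp only [Function.update_self, Function.update_of_ne hij, Function.update_of_ne hij.symm]
      rw [add_smul, smul_sub]; abel
    · rw [peel2 hij (fun l => Function.update c j (c j - c i) l * Function.update v i (v i + v j) l)]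
      have hrest : ∑ l ∈ (Finset.univ.erase i).erase j,
          Function.update c j (c j - c i) l * Function.update v i (v i + v j) l
          = ∑ l ∈ (Finset.univ.erase i).erase j, c l * v l := by
        refine Finset.sum_congr rfl fun l hl => ?_
        have hlj := (Finset.mem_erase.1 hl).1
        have hli := (Finset.mem_erase.1 (Finset.mem_erase.1 hl).2).1
        rw [Function.update_of_ne hli, Function.update_of_ne hlj]
      rw [hrest]
      simp only [Function.update_self, Function.update_of_ne hij, Function.update_of_ne hij.symm]
      linear_combination hc'
    · rw [peel1 i (fun l => (Function.update v i (v i + v j) l).natAbs),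
        peel1 i (fun l => (v l).natAbs)]
      have hrest : ∑ l ∈ Finset.univ.erase i, (Function.update v i (v i + v j) l).natAbs
          = ∑ l ∈ Finset.univ.erase i, (v l).natAbs := by
        refine Finset.sum_congr rfl fun l hl => ?_
        rw [Function.update_of_ne (Finset.mem_erase.1 hl).1]
      rw [hrest, Function.update_self]
      have : (v i + v j).natAbs < (v i).natAbs := by omega
      omega

private lemma lemB {k : ℕ} (n : ℕ) :
    ∀ (v : Fin k → ℤ), (∑ l, (v l).natAbs) = n →
    (∃ c : Fin k → ℤ, ∑ l, c l * v l = 1) → ∀ ω : Fin k → H,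
    ∃ (γ : Fin k → H) (i₀ : Fin k),
      Relation.ReflTransGen ElemTrans ω γ ∧ γ i₀ = ∑ l, v l • ω l := by
  induction n using Nat.strong_induction_on with
  | _ n IH =>
    rintro v rfl ⟨c, hc⟩ ω
    have hvne : ∃ i₀, v i₀ ≠ 0 := by
      by_contra h
      push_neg at h
      simp [h] at hc
    obtain ⟨i₀, hi₀⟩ := hvne
    by_cases hB : ∃ j, j ≠ i₀ ∧ v j ≠ 0
    · obtain ⟨j, hji, hvj⟩ := hB
      rcases le_total ((v j).natAbs) ((v i₀).natAbs) with habs | habs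
      · obtain ⟨v', c', γ₁, hstep, hsum, hc', hlt⟩ :=
          euclid_step ω v c (Ne.symm hji) hi₀ hvj habs hc
        obtain ⟨γ, i₁, hchain, hγ⟩ := IH _ hlt v' rfl ⟨c', hc'⟩ γ₁
        exact ⟨γ, i₁, Relation.ReflTransGen.head hstep hchain, by rw [hγ, hsum]⟩
      · obtain ⟨v', c', γ₁, hstep, hsum, hc', hlt⟩ :=
          euclid_step ω v c hji hvj hi₀ habs hc
        obtain ⟨γ, i₁, hchain, hγ⟩ := IH _ hlt v' rfl ⟨c', hc'⟩ γ₁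
        exact ⟨γ, i₁, Relation.ReflTransGen.head hstep hchain, by rw [hγ, hsum]⟩
    · push_neg at hB
      have hsum : ∑ l, v l • ω l = v i₀ • ω i₀ :=
        Finset.sum_eq_single i₀ (fun b _ hb => by rw [hB b hb, zero_smul]) (by simp)
      have hcs : c i₀ * v i₀ = 1 := by
        rw [← hc, peel1 i₀ (fun l => c l * v l)]
        have : ∑ l ∈ Finset.univ.erase i₀, c l * v l = 0 := by
          refine Finset.sum_eq_zero fun l hl => ?_
          rw [hB l (Finset.mem_erase.1 hl).1, mul_zero]
        rw [this, add_zero]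
      have : v i₀ = 1 ∨ v i₀ = -1 := by
        have : v i₀ ∣ 1 := Dvd.intro (c i₀) (by linarith [hcs])
        exact Int.isUnit_iff.mp (isUnit_of_dvd_one this)
      rcases this with h1 | h1
      · exact ⟨ω, i₀, Relation.ReflTransGen.refl, by rw [hsum, h1, one_smul]⟩
      · refine ⟨Function.update ω i₀ (-ω i₀), i₀,
          Relation.ReflTransGen.single (ElemTrans.neg ω i₀), ?_⟩
        rw [hsum, h1, Function.update_self, neg_smul, one_smul]

private lemma mem_closure_range_tuple {m : ℕ} (ψ : Fin m → H) (x : H)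
    (hx : x ∈ AddSubgroup.closure (Set.range ψ)) : ∃ c : Fin m → ℤ, ∑ j, c j • ψ j = x := by
  have hle : AddSubgroup.closure (Set.range ψ) ≤ (Submodule.span ℤ (Set.range ψ)).toAddSubgroup :=
    AddSubgroup.closure_le _ |>.2 Submodule.subset_span
  exact Submodule.mem_span_range_iff_exists_fun ℤ |>.1 (hle hx)

private lemma exists_bezout_kernel_vector {k : ℕ}
    (ω : Fin k → H) (hgen : AddSubgroup.closure (Set.range ω) = ⊤)
    (hk : minNumGen H < k) :
    ∃ v : Fin k → ℤ, (∑ l, v l • ω l = 0) ∧ ∃ c : Fin k → ℤ, ∑ l, c l * v l = 1 := by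
  classical
  set s := minNumGen H with hs
  set φ : (Fin k → ℤ) →ₗ[ℤ] H := Fintype.linearCombination ℤ ω with hφ
  have hφ_apply : ∀ x : Fin k → ℤ, φ x = ∑ l, x l • ω l := fun x => rfl
  have hφ_surj : Function.Surjective φ := by
    intro x
    have hx : x ∈ AddSubgroup.closure (Set.range ω) := hgen ▸ AddSubgroup.mem_top x
    obtain ⟨c, hc⟩ := mem_closure_range_tuple ω x hx
    exact ⟨c, hc⟩
  set K : Submodule ℤ (Fin k → ℤ) := LinearMap.ker φ with hK
  obtain ⟨n, snf⟩ := K.smithNormalForm (Pi.basisFun ℤ (Fin k))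
  have hbez : ∃ cA : Fin n → ℤ, ∑ i, cA i * snf.a i = 1 := by
    by_contra hnc
    obtain ⟨q, hq, hqdvd⟩ : ∃ q : ℕ, q.Prime ∧ ∀ i, (q : ℤ) ∣ snf.a i := by
      set I : Ideal ℤ := Ideal.span (Set.range snf.a) with hI
      have h1 : I ≠ ⊤ := by
        intro htop
        have : (1 : ℤ) ∈ I := htop ▸ Submodule.mem_top
        obtain ⟨c, hc⟩ := Submodule.mem_span_range_iff_exists_fun ℤ |>.1 this
        exact hnc ⟨c, by simpa [smul_eq_mul] using hc⟩
      obtain ⟨g, hg⟩ : ∃ g : ℤ, I = Ideal.span {g} :=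
        ⟨Submodule.IsPrincipal.generator I, (Submodule.IsPrincipal.span_singleton_generator I).symm⟩
      have hgu : ¬IsUnit g := fun hu => h1 (hg ▸ Ideal.span_singleton_eq_top.2 hu)
      have hna : g.natAbs ≠ 1 := fun h => hgu (Int.isUnit_iff_natAbs_eq.2 h)
      obtain ⟨q, hqp, hqg⟩ := Nat.exists_prime_and_dvd hna
      refine ⟨q, hqp, fun i => ?_⟩
      have hai : snf.a i ∈ I := Ideal.subset_span ⟨i, rfl⟩
      have hgdvd : g ∣ snf.a i := Ideal.mem_span_singleton.1 (hg ▸ hai)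
      calc (q : ℤ) ∣ (g.natAbs : ℤ) := Int.natCast_dvd_natCast.2 hqg
        _ ∣ g := Int.natAbs_dvd.2 dvd_rfl
        _ ∣ snf.a i := hgdvd
    haveI : Fact q.Prime := ⟨hq⟩
    have hKdvd : ∀ w ∈ K, ∀ l, (q : ℤ) ∣ w l := by
      intro w hw l
      have hrepr : (⟨w, hw⟩ : K) = ∑ i, snf.bN.repr ⟨w, hw⟩ i • snf.bN i :=
        (snf.bN.sum_repr ⟨w, hw⟩).symm
      have : w = ∑ i, snf.bN.repr ⟨w, hw⟩ i • (snf.bN i : Fin k → ℤ) := by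
        have := congrArg (Subtype.val) hrepr
        simp only [Submodule.coe_sum, Submodule.coe_smul] at this; exact this
      rw [this]
      rw [Finset.sum_apply]
      refine Finset.dvd_sum fun i _ => ?_
      rw [Pi.smul_apply, snf.snf i, Pi.smul_apply, smul_eq_mul, smul_eq_mul]
      exact ((hqdvd i).mul_right _).mul_left _
    have hS : s ∈ {m : ℕ | ∃ ψ : Fin m → H, AddSubgroup.closure (Set.range ψ) = ⊤} :=
      Nat.sInf_mem ⟨k, ω, hgen⟩
    obtain ⟨ψ, hψ⟩ := hS
    choose u hu using fun j => hφ_surj (ψ j)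
    have hspan : Submodule.span (ZMod q)
        (Set.range fun j (l : Fin k) => ((u j l : ℤ) : ZMod q)) = ⊤ := by
      rw [eq_top_iff]
      rintro x -
      set xt : Fin k → ℤ := fun l => ((x l).val : ℤ) with hxt
      have hxtc : ∀ l, ((xt l : ℤ) : ZMod q) = x l := by
        intro l
        simp [hxt, ZMod.natCast_val, ZMod.cast_id]
      obtain ⟨m, hm⟩ := mem_closure_range_tuple ψ (φ xt) (hψ ▸ AddSubgroup.mem_top _)
      have hker : (xt - ∑ j, m j • u j) ∈ K := by
        rw [hK, LinearMap.mem_ker, map_sub, map_sum]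
        have : ∀ j, φ (m j • u j) = m j • ψ j := by
          intro j; rw [map_smul, hu j]
        simp only [this]
        rw [hm, sub_self]
      have hdvd := hKdvd _ hker
      rw [Submodule.mem_span_range_iff_exists_fun (ZMod q)]
      refine ⟨fun j => (m j : ZMod q), ?_⟩
      funext l
      have h1 : ((xt l - (∑ j, m j • u j) l : ℤ) : ZMod q) = 0 :=
        (ZMod.intCast_zmod_eq_zero_iff_dvd _ _).2 (by simpa using hdvd l)
      have h2 : ((xt l : ℤ) : ZMod q) = (((∑ j, m j • u j) l : ℤ) : ZMod q) := by
        rw [← sub_eq_zero, ← Int.cast_sub]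
        exact h1
      calc (∑ j, (m j : ZMod q) • fun l => ((u j l : ℤ) : ZMod q)) l
          = ∑ j, (m j : ZMod q) * ((u j l : ℤ) : ZMod q) := by
            rw [Finset.sum_apply]; rfl
        _ = (((∑ j, m j • u j) l : ℤ) : ZMod q) := by
            rw [Finset.sum_apply]
            rw [Int.cast_sum]
            refine Finset.sum_congr rfl fun j _ => ?_
            rw [Pi.smul_apply, smul_eq_mul, Int.cast_mul]
        _ = ((xt l : ℤ) : ZMod q) := h2.symm
        _ = x l := hxtc l
    have hfr : Module.finrank (ZMod q) (Fin k → ZMod q) ≤ s :=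
      (finrank_le_of_span_eq_top hspan).trans (by simp)
    rw [Module.finrank_pi] at hfr
    simp at hfr
    omega
  obtain ⟨cA, hcA⟩ := hbez
  set vK : K := ∑ i, snf.bN i with hvK
  set v : Fin k → ℤ := (vK : Fin k → ℤ) with hv
  have hvker : φ v = 0 := vK.2
  refine ⟨v, by rw [← hφ_apply, hvker], ?_⟩
  set F0 : (Fin k → ℤ) →ₗ[ℤ] ℤ := ∑ i, cA i • snf.bM.coord (snf.f i) with hF0
  have hF0v : F0 v = 1 := by
    rw [hF0]
    rw [LinearMap.sum_apply]
    have : ∀ i, (cA i • snf.bM.coord (snf.f i)) v = cA i * snf.a i := by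
      intro i
      rw [LinearMap.smul_apply, smul_eq_mul, Module.Basis.coord_apply]
      have := snf.repr_apply_embedding_eq_repr_smul (m := vK) (i := i)
      rw [hv, this]
      have : snf.bN.repr (snf.a i • vK) i = snf.a i := by
        rw [map_smul, hvK]
        simp [Finsupp.smul_apply, smul_eq_mul]
      rw [this]
    simp only [this]
    exact hcA
  refine ⟨fun l => F0 (Pi.single l 1), ?_⟩
  have hvdec : v = ∑ l, v l • Pi.single l (1 : ℤ) := by
    funext t
    rw [Finset.sum_apply]
    simp [Pi.single_apply, mul_ite, Finset.sum_ite_eq']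
  calc ∑ l, F0 (Pi.single l 1) * v l = ∑ l, v l • F0 (Pi.single l 1) := by
        refine Finset.sum_congr rfl fun l _ => ?_
        rw [smul_eq_mul, mul_comm]
    _ = F0 (∑ l, v l • Pi.single l (1:ℤ)) := by
        rw [map_sum]
        exact Finset.sum_congr rfl fun l _ => (map_smul F0 (v l) _).symm
    _ = F0 v := by rw [← hvdec]
    _ = 1 := hF0v

private lemma update_snoc {m : ℕ} (a : Fin m → H) (c x : H) (i : Fin m) :
    (Fin.snoc (Function.update a i x) c : Fin (m+1) → H)
      = Function.update (Fin.snoc a c : Fin (m+1) → H) i.castSucc x := by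
  funext l
  induction l using Fin.lastCases with
  | last =>
      rw [Fin.snoc_last, Function.update_of_ne (Fin.castSucc_lt_last i).ne']
      rw [Fin.snoc_last]
  | cast t =>
      rw [Fin.snoc_castSucc]
      rcases eq_or_ne t i with rfl | ht
      · rw [Function.update_self, Function.update_self]
      · rw [Function.update_of_ne ht, Function.update_of_ne (by simpa [Fin.castSucc_inj] using ht),
          Fin.snoc_castSucc]

private lemma elemTrans_snoc {m : ℕ} {a b : Fin m → H} (c : H) (h : ElemTrans a b) :
    ElemTrans (Fin.snoc a c : Fin (m+1) → H) (Fin.snoc b c) := by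
  cases h with
  | add i j hij =>
      have heq : (Fin.snoc (Function.update a i (a i + a j)) c : Fin (m+1) → H)
          = Function.update (Fin.snoc a c) i.castSucc
              ((Fin.snoc a c : Fin (m+1) → H) i.castSucc
                + (Fin.snoc a c : Fin (m+1) → H) j.castSucc) := by
        rw [update_snoc, Fin.snoc_castSucc, Fin.snoc_castSucc]
      rw [heq]
      exact ElemTrans.add _ i.castSucc j.castSucc (by simpa [Fin.castSucc_inj] using hij)
  | sub i j hij =>
      have heq : (Fin.snoc (Function.update a i (a i - a j)) c : Fin (m+1) → H)
          = Function.update (Fin.snoc a c) i.castSucc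
              ((Fin.snoc a c : Fin (m+1) → H) i.castSucc
                - (Fin.snoc a c : Fin (m+1) → H) j.castSucc) := by
        rw [update_snoc, Fin.snoc_castSucc, Fin.snoc_castSucc]
      rw [heq]
      exact ElemTrans.sub _ i.castSucc j.castSucc (by simpa [Fin.castSucc_inj] using hij)
  | neg i =>
      have heq : (Fin.snoc (Function.update a i (-a i)) c : Fin (m+1) → H)
          = Function.update (Fin.snoc a c) i.castSucc
              (-(Fin.snoc a c : Fin (m+1) → H) i.castSucc) := by
        rw [update_snoc, Fin.snoc_castSucc]
      rw [heq]
      exact ElemTrans.neg _ i.castSucc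
  | perm σ =>
      set σ' : Equiv.Perm (Fin (m+1)) :=
        (finSuccEquivLast (n := m)).symm.permCongr σ.optionCongr with hσ'
      have heq : (Fin.snoc (a ∘ σ) c : Fin (m+1) → H) = (Fin.snoc a c : Fin (m+1) → H) ∘ σ' := by
        funext l
        induction l using Fin.lastCases with
        | last =>
            have : σ' (Fin.last m) = Fin.last m := by
              simp [hσ', Equiv.permCongr_apply]
            rw [Fin.snoc_last, Function.comp_apply, this, Fin.snoc_last]
        | cast t =>
            have : σ' t.castSucc = (σ t).castSucc := by
              simp [hσ', Equiv.permCongr_apply]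
            simp only [Function.comp_apply, this, Fin.snoc_castSucc]
      rw [heq]
      exact ElemTrans.perm _ σ'

private lemma reflTrans_snoc {m : ℕ} {a b : Fin m → H} (c : H)
    (h : Relation.ReflTransGen ElemTrans a b) :
    Relation.ReflTransGen ElemTrans (Fin.snoc a c : Fin (m+1) → H) (Fin.snoc b c) := by
  induction h with
  | refl => exact Relation.ReflTransGen.refl
  | tail _ hstep ih => exact ih.tail (elemTrans_snoc c hstep)

end Main

/-- **Selecting a minimal generating system by elementary transformations.**
If `H` is a finitely generated abelian group with `s = μ(H)` and
`(ω₁, …, ω_k)` generates `H`, then a finite sequence of elementary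
transformations carries it to a tuple `(γ₁, …, γ_k)` whose first `s` entries
generate `H` and whose remaining entries are zero. -/
theorem exists_elemTrans_to_minimal_generators
    {H : Type*} [AddCommGroup H] [AddGroup.FG H] {k : ℕ}
    (ω : Fin k → H) (hgen : AddSubgroup.closure (Set.range ω) = ⊤) :
    ∃ γ : Fin k → H,
      Relation.ReflTransGen ElemTrans ω γ ∧
      AddSubgroup.closure (γ '' {i : Fin k | (i : ℕ) < minNumGen H}) = ⊤ ∧
      ∀ i : Fin k, minNumGen H ≤ (i : ℕ) → γ i = 0 := by
  induction k with
  | zero =>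
      refine ⟨ω, Relation.ReflTransGen.refl, ?_, fun i _ => absurd i.2 (by omega)⟩
      have h1 : (ω '' {i : Fin 0 | (i : ℕ) < minNumGen H}) = Set.range ω := by
        ext x
        constructor
        · rintro ⟨i, -, -⟩
          exact i.elim0
        · rintro ⟨i, rfl⟩
          exact i.elim0
      rw [h1, hgen]
  | succ m ih =>
      by_cases hk : m + 1 ≤ minNumGen H
      · refine ⟨ω, Relation.ReflTransGen.refl, ?_,
          fun i hi => absurd (lt_of_lt_of_le i.2 hk) (not_lt.2 hi)⟩
        have h1 : {i : Fin (m+1) | (i : ℕ) < minNumGen H} = Set.univ := by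
          ext i
          simpa using lt_of_lt_of_le i.2 hk
        rw [h1, Set.image_univ, hgen]
      · push_neg at hk
        set s := minNumGen H with hs
        -- find a Bezout kernel vector and kill one entry
        obtain ⟨v, hv0, hvbez⟩ := exists_bezout_kernel_vector ω hgen hk
        obtain ⟨γ₁, i₀, hchain₁, hγ₁⟩ := lemB _ v rfl hvbez ω
        have hγ₁0 : γ₁ i₀ = 0 := by rw [hγ₁, hv0]
        -- move the zero entry to the last position
        set σ : Equiv.Perm (Fin (m+1)) := Equiv.swap i₀ (Fin.last m) with hσ
        set γ₂ : Fin (m+1) → H := γ₁ ∘ σ with hγ₂def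
        have hstep₂ : ElemTrans γ₁ γ₂ := ElemTrans.perm γ₁ σ
        have hchain₂ : Relation.ReflTransGen ElemTrans ω γ₂ := hchain₁.tail hstep₂
        have hγ₂last : γ₂ (Fin.last m) = 0 := by
          rw [hγ₂def, Function.comp_apply, hσ, Equiv.swap_apply_right, hγ₁0]
        have hγ₂gen : AddSubgroup.closure (Set.range γ₂) = ⊤ := by
          rw [reflTrans_closure hchain₂, hgen]
        -- restrict to the first m entries
        set δ : Fin m → H := γ₂ ∘ Fin.castSucc with hδ
        have hδgen : AddSubgroup.closure (Set.range δ) = ⊤ := by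
          apply le_antisymm le_top
          rw [← hγ₂gen]
          refine AddSubgroup.closure_le _ |>.2 ?_
          rintro x ⟨l, rfl⟩
          induction l using Fin.lastCases with
          | last =>
              rw [hγ₂last]
              exact zero_mem _
          | cast t =>
              exact AddSubgroup.subset_closure ⟨t, rfl⟩
        obtain ⟨γ', hchain', hγ'gen, hγ'zero⟩ := ih δ hδgen
        have hγ₂eq : γ₂ = (Fin.snoc δ 0 : Fin (m+1) → H) := by
          funext l
          induction l using Fin.lastCases with
          | last => rw [Fin.snoc_last, hγ₂last]
          | cast t => rw [Fin.snoc_castSucc]; rfl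
        refine ⟨Fin.snoc γ' 0, ?_, ?_, ?_⟩
        · exact hchain₂.trans (hγ₂eq ▸ reflTrans_snoc (0 : H) hchain')
        · have himg : (Fin.snoc γ' 0 : Fin (m+1) → H) '' {i : Fin (m+1) | (i : ℕ) < s}
              = γ' '' {j : Fin m | (j : ℕ) < s} := by
            ext x
            constructor
            · rintro ⟨i, hi, rfl⟩
              have hi' : (i : ℕ) < s := hi
              have him : (i : ℕ) < m := by
                have := i.2
                omega
              refine ⟨⟨(i : ℕ), him⟩, hi, ?_⟩
              have hieq : i = Fin.castSucc ⟨(i : ℕ), him⟩ := by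
                ext; rfl
              have h2 : (Fin.snoc γ' 0 : Fin (m+1) → H) (Fin.castSucc ⟨(i : ℕ), him⟩)
                  = γ' ⟨(i : ℕ), him⟩ := Fin.snoc_castSucc _ _ _
              exact ((congrArg (Fin.snoc γ' 0) hieq).trans h2).symm
            · rintro ⟨j, hj, rfl⟩
              exact ⟨Fin.castSucc j, by simpa using hj, by rw [Fin.snoc_castSucc]⟩
          rw [himg]
          exact hγ'gen
        · intro i hi
          induction i using Fin.lastCases with
          | last => rw [Fin.snoc_last]
          | cast t =>
              rw [Fin.snoc_castSucc]
              exact hγ'zero t hi
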